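/- arXiv:1302.2007 — 2 statements merged into one kernel-verified Lean document; each statement's English description precedes it below -/
import Mathlib

section
/- If two hermitian linear functionals u and v on the space of Laurent polynomials satisfy u·L = v·M for some nonzero Laurent polynomials L and M (where (u·L)[f] := u[L·f]), then their Carathéodory formal series F and G satisfy F·L = G·M + C for some Laurent polynomial C. In fact C = F·L − G·M = G_*·M − F_*·L lies in Λ_{p,q} whenever L, M ∈ Λ_{p,q}. -/
open LaurentPolynomial Complex Polynomial

noncomputable section

abbrev LP := LaurentPolynomial ℂ
abbrev Func := LP →ₗ[ℂ] ℂ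

/-- The coefficients of a Laurent polynomial, as a finitely supported function on `ℤ`. -/
def coeF (L : LP) : ℤ →₀ ℂ := L.coeff

/-- The modified functional `u·L`, defined by `(u·L)[f] = u[L·f]`. -/
def smulF (u : Func) (L : LP) : Func := u ∘ₗ LinearMap.mulLeft ℂ L

/-- The moments `μ_n = u[zⁿ]`. -/
def moment (u : Func) (n : ℤ) : ℂ := u (T n)

/-- A functional is hermitian if `μ_{-n} = conj μ_n`. -/
def IsHermitian (u : Func) : Prop := ∀ n : ℤ, moment u (-n) = (starRingEnd ℂ) (moment u n)

/-- The Carathéodory formal series `F(z) = μ₀ + 2 Σ_{n≥1} μ_{-n} zⁿ`, as coefficients. -/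
def CS (u : Func) : ℤ → ℂ := fun n => if n = 0 then moment u 0 else if 0 < n then 2 * moment u (-n) else 0

/-- The Laurent formal series `L[u](z) = Σ_{n∈ℤ} μ_{-n} zⁿ`, as coefficients. -/
def LS (u : Func) : ℤ → ℂ := fun n => moment u (-n)

/-- `H_*(z) = conj (H (1/conj z))`, coefficient-wise. -/
def starS (H : ℤ → ℂ) : ℤ → ℂ := fun n => (starRingEnd ℂ) (H (-n))

/-- Product of a formal doubly-infinite series with a Laurent polynomial. -/
def mulS (H : ℤ → ℂ) (L : LP) : ℤ → ℂ := fun n => (coeF L).sum fun k c => c * H (n - k)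

/-- The `*` operation on Laurent polynomials: `L_*(z) = conj (L (1/conj z))`. -/
def starLP (L : LP) : LP := AddMonoidAlgebra.ofCoeff
  (Finsupp.equivMapDomain (Equiv.neg ℤ)
    (Finsupp.mapRange (starRingEnd ℂ) (map_zero _) (coeF L)) : ℤ →₀ ℂ)

/-- A Laurent polynomial as a formal series. -/
def polyS (N : LP) : ℤ → ℂ := fun n => coeF N n

/-- The Lebesgue functional `leb[zⁿ] = δ_{n,0}`. -/
def lebF : Func := (Finsupp.lapply (0 : ℤ) : (ℤ →₀ ℂ) →ₗ[ℂ] ℂ) ∘ₗ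
  (AddMonoidAlgebra.coeffLinearEquiv ℂ : LP ≃ₗ[ℂ] (ℤ →₀ ℂ)).toLinearMap

/-- The Dirac delta at `z = 1`: evaluation at `1`. -/
def delta1 : Func := (Finsupp.lsum ℂ (fun _ : ℤ => (LinearMap.id : ℂ →ₗ[ℂ] ℂ)) : (ℤ →₀ ℂ) →ₗ[ℂ] ℂ) ∘ₗ
  (AddMonoidAlgebra.coeffLinearEquiv ℂ : LP ≃ₗ[ℂ] (ℤ →₀ ℂ)).toLinearMap

/-- `P* (z) = z^q conj(P(1/conj z))` with `q` given: conjugate coefficients and reflect at `q`. -/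
def starDeg (q : ℕ) (P : Polynomial ℂ) : Polynomial ℂ := Polynomial.reflect q (P.map (starRingEnd ℂ))

/-- The class `Δ` of hermitian functionals annihilated by a nonzero Laurent polynomial. -/
def InDelta (u : Func) : Prop := IsHermitian u ∧ ∃ N : LP, N ≠ 0 ∧ smulF u N = 0

/-!
For hermitian `u` the series `F + F_*` is `2 L[u]`, and the `n`-th coefficient of `L[u]·L` is
`u[L z⁻ⁿ]`, so `u·L = v·M` gives `F·L + F_*·L = G·M + G_*·M`. Hence
`F·L - G·M = G_*·M - F_*·L`; the left side vanishes below `p` because `F` and `G` are power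
series, the right side vanishes above `q` because `F_*` and `G_*` are power series in `z⁻¹`,
so it is a Laurent polynomial in `Λ_{p,q}`.
-/

section FormalSeries

lemma mulS_add_left (H K : ℤ → ℂ) (L : LP) (n : ℤ) :
    mulS (H + K) L n = mulS H L n + mulS K L n := by
  simp only [mulS, Pi.add_apply, mul_add, Finsupp.sum_add]

lemma mulS_const_mul_left (c : ℂ) (H : ℤ → ℂ) (L : LP) (n : ℤ) :
    mulS (fun k => c * H k) L n = c * mulS H L n := by
  simp only [mulS, Finsupp.sum, Finset.mul_sum]
  exact Finset.sum_congr rfl fun k _ => by ring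

lemma mulS_eq_zero_of_lt {H : ℤ → ℂ} (hH : ∀ k < 0, H k = 0) {L : LP} {p : ℤ}
    (hL : ∀ k, coeF L k ≠ 0 → p ≤ k) {n : ℤ} (hn : n < p) : mulS H L n = 0 :=
  Finset.sum_eq_zero fun k hk => by
    show coeF L k * H (n - k) = 0
    rw [hH _ (by linarith [hL k (Finsupp.mem_support_iff.mp hk)]), mul_zero]

lemma mulS_eq_zero_of_gt {H : ℤ → ℂ} (hH : ∀ k > 0, H k = 0) {L : LP} {q : ℤ}
    (hL : ∀ k, coeF L k ≠ 0 → k ≤ q) {n : ℤ} (hn : q < n) : mulS H L n = 0 :=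
  Finset.sum_eq_zero fun k hk => by
    show coeF L k * H (n - k) = 0
    rw [hH _ (by linarith [hL k (Finsupp.mem_support_iff.mp hk)]), mul_zero]

lemma exists_polyS_eq_of_support_subset_Icc {D : ℤ → ℂ} {p q : ℤ}
    (hD : ∀ n, D n ≠ 0 → p ≤ n ∧ n ≤ q) :
    ∃ C : LP, (∀ k, coeF C k ≠ 0 → p ≤ k ∧ k ≤ q) ∧ polyS C = D :=
  ⟨AddMonoidAlgebra.ofCoeff (Finsupp.onFinset (Finset.Icc p q) D
      fun n hn => Finset.mem_Icc.2 (hD n hn)), hD, rfl⟩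

end FormalSeries

section Functionals

lemma apply_C_mul_T (w : Func) (c : ℂ) (m : ℤ) :
    w (LaurentPolynomial.C c * T m) = c * moment w m := by
  rw [← LaurentPolynomial.smul_eq_C_mul, map_smul, smul_eq_mul, moment]

lemma mulS_LS (w : Func) (L : LP) (n : ℤ) : mulS (LS w) L n = w (L * T (-n)) := by
  conv_rhs => rw [← AddMonoidAlgebra.sum_coeff_single L, Finsupp.sum, Finset.sum_mul,
    map_sum]
  refine Finset.sum_congr rfl fun k _ => ?_
  show coeF L k * moment w (-(n - k)) = _
  rw [single_eq_C_mul_T, mul_assoc, ← T_add, apply_C_mul_T, neg_sub, sub_eq_neg_add, add_comm]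
  rfl

lemma mulS_LS_eq_of_smulF_eq {u v : Func} {L M : LP} (h : smulF u L = smulF v M) :
    mulS (LS u) L = mulS (LS v) M := by
  funext n
  rw [mulS_LS, mulS_LS]
  exact LinearMap.congr_fun h (T (-n))

lemma CS_eq_zero_of_neg (w : Func) {n : ℤ} (hn : n < 0) : CS w n = 0 := by
  simp [CS, hn.ne, hn.not_gt]

lemma starS_CS_eq_zero_of_pos (w : Func) {n : ℤ} (hn : 0 < n) : starS (CS w) n = 0 := by
  rw [starS, CS_eq_zero_of_neg w (neg_neg_of_pos hn), map_zero]

lemma CS_add_starS_CS {w : Func} (hw : IsHermitian w) :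
    CS w + starS (CS w) = fun n => 2 * LS w n := by
  funext n
  rcases lt_trichotomy n 0 with h | rfl | h
  · simp [CS, starS, LS, h.ne, h.not_gt, (neg_pos.2 h).ne', h, hw n, Complex.conj_ofNat]
  · have h0 := hw 0
    rw [neg_zero] at h0
    simp only [Pi.add_apply, CS, starS, LS, neg_zero, if_true, ← h0]
    ring
  · simp [CS, starS, LS, h.ne', h, h.not_gt]

lemma mulS_CS_add_mulS_starS_CS {w : Func} (hw : IsHermitian w) (L : LP) (n : ℤ) :
    mulS (CS w) L n + mulS (starS (CS w)) L n = 2 * mulS (LS w) L n := by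
  rw [← mulS_add_left, CS_add_starS_CS hw, mulS_const_mul_left]

end Functionals

theorem stmt0_general (u v : Func) (hu : IsHermitian u) (hv : IsHermitian v)
    (L M : LP) (p q : ℤ)
    (hLpq : ∀ k, coeF L k ≠ 0 → p ≤ k ∧ k ≤ q)
    (hMpq : ∀ k, coeF M k ≠ 0 → p ≤ k ∧ k ≤ q)
    (hRM : smulF u L = smulF v M) :
    ∃ C : LP,
      (∀ k, coeF C k ≠ 0 → p ≤ k ∧ k ≤ q) ∧
      mulS (CS u) L = (fun n => mulS (CS v) M n + coeF C n) ∧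
      polyS C = (fun n => mulS (CS u) L n - mulS (CS v) M n) ∧
      polyS C = (fun n => mulS (starS (CS v)) M n - mulS (starS (CS u)) L n) := by
  have key : ∀ n, mulS (CS u) L n - mulS (CS v) M n
      = mulS (starS (CS v)) M n - mulS (starS (CS u)) L n := fun n => by
    linear_combination mulS_CS_add_mulS_starS_CS hu L n - mulS_CS_add_mulS_starS_CS hv M n
      + 2 * congrFun (mulS_LS_eq_of_smulF_eq hRM) n
  have hsupp : ∀ n, mulS (CS u) L n - mulS (CS v) M n ≠ 0 → p ≤ n ∧ n ≤ q := by
    intro n hn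
    by_contra! hout
    refine hn ?_
    rcases lt_or_ge n p with hp | hp
    · rw [mulS_eq_zero_of_lt (fun _ => CS_eq_zero_of_neg u) (fun k hk => (hLpq k hk).1) hp,
        mulS_eq_zero_of_lt (fun _ => CS_eq_zero_of_neg v) (fun k hk => (hMpq k hk).1) hp,
        sub_zero]
    · have hq := hout hp
      rw [key,
        mulS_eq_zero_of_gt (fun _ => starS_CS_eq_zero_of_pos v) (fun k hk => (hMpq k hk).2) hq,
        mulS_eq_zero_of_gt (fun _ => starS_CS_eq_zero_of_pos u) (fun k hk => (hLpq k hk).2) hq,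
        sub_zero]
  obtain ⟨C, hCpq, hC⟩ := exists_polyS_eq_of_support_subset_Icc hsupp
  refine ⟨C, hCpq, funext fun n => ?_, hC, hC.trans (funext key)⟩
  rw [← polyS, hC]
  ring

/-- a rational modification `u·L = v·M` induces a linear spectral
transformation `F·L = G·M + C`, with `C = F·L - G·M = G_*·M - F_*·L ∈ Λ_{p,q}`
whenever `L, M ∈ Λ_{p,q}`. -/
theorem stmt0 (u v : Func) (hu : IsHermitian u) (hv : IsHermitian v)
    (L M : LP) (hL : L ≠ 0) (hM : M ≠ 0) (p q : ℤ)
    (hLpq : ∀ k, coeF L k ≠ 0 → p ≤ k ∧ k ≤ q)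
    (hMpq : ∀ k, coeF M k ≠ 0 → p ≤ k ∧ k ≤ q)
    (hRM : smulF u L = smulF v M) :
    ∃ C : LP,
      (∀ k, coeF C k ≠ 0 → p ≤ k ∧ k ≤ q) ∧
      mulS (CS u) L = (fun n => mulS (CS v) M n + coeF C n) ∧
      polyS C = (fun n => mulS (CS u) L n - mulS (CS v) M n) ∧
      polyS C = (fun n => mulS (starS (CS v)) M n - mulS (starS (CS u)) L n) :=
  stmt0_general u v hu hv L M p q hLpq hMpq hRM
end
end

section
/- Let u, v be hermitian functionals related by a rational modification u·L = v·M with L, M nonzero Laurent polynomials. The correspondence L ↔ M is uniquely determined (i.e., u·L = v·M and u·L = v·M₁ imply M = M₁, and symmetrically) if and only if u ∉ Δ and v ∉ Δ. -/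
open LaurentPolynomial Complex Polynomial

noncomputable section

/-!
Since `L ↦ u·L` is linear, `u·L = v·M` determines `L` from `M` exactly when no nonzero `N`
annihilates `u`, i.e. when `u ∉ Δ`; and an annihilator `N ≠ 0` of `u` moves a given `L₀` along
the line `L₀ + ℂN`, which contains a second nonzero point.
-/

lemma exists_smul_ne_zero_add_smul_ne_zero {K V : Type*} [DivisionRing K] [CharZero K]
    [AddCommGroup V] [Module K V] (L : V) {N : V} (hN : N ≠ 0) :
    ∃ c : K, c • N ≠ 0 ∧ L + c • N ≠ 0 := by
  by_cases h : L + N = 0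
  · refine ⟨2, smul_ne_zero two_ne_zero hN, ?_⟩
    rwa [two_smul, ← add_assoc, h, zero_add]
  · exact ⟨1, by rwa [one_smul], by rwa [one_smul]⟩

def smulFₗ (u : Func) : LP →ₗ[ℂ] Func where
  toFun := smulF u
  map_add' A B := by ext f; simp [smulF, add_mul]
  map_smul' c A := by ext f; simp [smulF]

@[simp]
lemma smulFₗ_apply (u : Func) (L : LP) : smulFₗ u L = smulF u L := rfl

lemma not_inDelta_iff_injective_smulF {u : Func} (hu : IsHermitian u) :
    ¬ InDelta u ↔ Function.Injective (smulF u) := by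
  rw [show smulF u = smulFₗ u from rfl, injective_iff_map_eq_zero]
  simp only [InDelta, hu, true_and, smulFₗ_apply, not_exists, not_and]
  exact forall_congr' fun N => by rw [imp_not_comm, not_not]

lemma injective_smulF_of_unique {u : Func} {L₀ : LP}
    (h : ∀ L, L ≠ 0 → smulF u L = smulF u L₀ → L = L₀) : Function.Injective (smulF u) := by
  rw [show smulF u = smulFₗ u from rfl, injective_iff_map_eq_zero]
  intro N hN
  by_contra hN₀
  obtain ⟨c, hc, hL⟩ := exists_smul_ne_zero_add_smul_ne_zero (K := ℂ) L₀ hN₀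
  have hfiber : smulF u (L₀ + c • N) = smulF u L₀ := by
    rw [← smulFₗ_apply, map_add, map_smul, hN, smul_zero, add_zero, smulFₗ_apply]
  exact hc (add_eq_left.mp (h _ hL hfiber))

/-- for hermitian `u, v` related by a rational modification, the
correspondence `L ↔ M` is uniquely determined iff `u ∉ Δ` and `v ∉ Δ`. -/
theorem stmt7 (u v : Func) (hu : IsHermitian u) (hv : IsHermitian v)
    (hRM : ∃ L M : LP, L ≠ 0 ∧ M ≠ 0 ∧ smulF u L = smulF v M) :
    ((∀ L M M₁ : LP, L ≠ 0 → M ≠ 0 → M₁ ≠ 0 →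
        smulF u L = smulF v M → smulF u L = smulF v M₁ → M = M₁) ∧
     (∀ M L L₁ : LP, M ≠ 0 → L ≠ 0 → L₁ ≠ 0 →
        smulF u L = smulF v M → smulF u L₁ = smulF v M → L = L₁)) ↔
    (¬ InDelta u ∧ ¬ InDelta v) := by
  obtain ⟨L₀, M₀, hL₀, hM₀, h₀⟩ := hRM
  rw [not_inDelta_iff_injective_smulF hu, not_inDelta_iff_injective_smulF hv]
  constructor
  · rintro ⟨hM_unique, hL_unique⟩
    exact ⟨injective_smulF_of_unique fun L hL h =>
        (hL_unique M₀ L₀ L hM₀ hL₀ hL h₀ (h.trans h₀)).symm,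
      injective_smulF_of_unique fun M hM h =>
        (hM_unique L₀ M₀ M hL₀ hM₀ hM h₀ (h₀.trans h.symm)).symm⟩
  · rintro ⟨hu_inj, hv_inj⟩
    exact ⟨fun _ _ _ _ _ _ hM hM₁ => hv_inj (hM.symm.trans hM₁),
      fun _ _ _ _ _ _ hL hL₁ => hu_inj (hL.trans hL₁.symm)⟩
end
end
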